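/- Let θ ∈ [0,1] and ε ∈ (−1,1). Then for all real numbers x, y, z, (α₂x + α₁y + α₀z)·(β₂x + β₁y + β₀z) = [((1+θ)/4)x² + ((1−θ)/4)y²] − [((1+θ)/4)y² + ((1−θ)/4)z²] + (a₂x + a₁y + a₀z)², where a₁ = −√(θ(1−θ²))/(√2·(1+εθ)), a₂ = −((1−ε)/2)·a₁ and a₀ = −((1+ε)/2)·a₁. -/

import Mathlib

noncomputable def dlnAlpha2 (θ : ℝ) : ℝ := (1 + θ) / 2
noncomputable def dlnAlpha1 (θ : ℝ) : ℝ := -θ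
noncomputable def dlnAlpha0 (θ : ℝ) : ℝ := (θ - 1) / 2

noncomputable def dlnBeta2 (θ ε : ℝ) : ℝ :=
  (1 / 4) * (1 + (1 - θ ^ 2) / (1 + ε * θ) ^ 2
    + ε ^ 2 * (θ * (1 - θ ^ 2)) / (1 + ε * θ) ^ 2 + θ)
noncomputable def dlnBeta1 (θ ε : ℝ) : ℝ :=
  (1 / 2) * (1 - (1 - θ ^ 2) / (1 + ε * θ) ^ 2)
noncomputable def dlnBeta0 (θ ε : ℝ) : ℝ :=
  (1 / 4) * (1 + (1 - θ ^ 2) / (1 + ε * θ) ^ 2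
    - ε ^ 2 * (θ * (1 - θ ^ 2)) / (1 + ε * θ) ^ 2 - θ)

noncomputable def dlnA1 (θ ε : ℝ) : ℝ :=
  -(Real.sqrt (θ * (1 - θ ^ 2))) / (Real.sqrt 2 * (1 + ε * θ))
noncomputable def dlnA2 (θ ε : ℝ) : ℝ := -((1 - ε) / 2) * dlnA1 θ ε
noncomputable def dlnA0 (θ ε : ℝ) : ℝ := -((1 + ε) / 2) * dlnA1 θ ε

/-! Expanding the product gives a quadratic form in `x, y, z`; after removing the telescoping
`G`-norm difference, what remains is the rank-one form
`θ (1 - θ²) / (2 (1 + εθ)²) · (y - (1 - ε)/2 · x - (1 + ε)/2 · z)²`, whose coefficient is `dlnA1²`. -/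

lemma dlnA1_sq {θ : ℝ} (ε : ℝ) (hθ : 0 ≤ θ * (1 - θ ^ 2)) :
    dlnA1 θ ε ^ 2 = θ * (1 - θ ^ 2) / (2 * (1 + ε * θ) ^ 2) := by
  rw [dlnA1, div_pow, neg_sq, mul_pow, Real.sq_sqrt hθ, Real.sq_sqrt zero_le_two]

lemma dlnA_combination_sq (θ ε x y z : ℝ) :
    (dlnA2 θ ε * x + dlnA1 θ ε * y + dlnA0 θ ε * z) ^ 2
      = dlnA1 θ ε ^ 2 * (y - (1 - ε) / 2 * x - (1 + ε) / 2 * z) ^ 2 := by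
  rw [dlnA2, dlnA0]
  ring

lemma dln_product_eq {θ ε : ℝ} (h : 1 + ε * θ ≠ 0) (x y z : ℝ) :
    (dlnAlpha2 θ * x + dlnAlpha1 θ * y + dlnAlpha0 θ * z)
      * (dlnBeta2 θ ε * x + dlnBeta1 θ ε * y + dlnBeta0 θ ε * z)
      = (((1 + θ) / 4) * x ^ 2 + ((1 - θ) / 4) * y ^ 2)
        - (((1 + θ) / 4) * y ^ 2 + ((1 - θ) / 4) * z ^ 2)
        + θ * (1 - θ ^ 2) / (2 * (1 + ε * θ) ^ 2)
          * (y - (1 - ε) / 2 * x - (1 + ε) / 2 * z) ^ 2 := by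
  have h' : 1 + θ * ε ≠ 0 := by rwa [mul_comm]
  simp only [dlnAlpha2, dlnAlpha1, dlnAlpha0, dlnBeta2, dlnBeta1, dlnBeta0]
  field_simp
  ring

lemma one_add_mul_pos_of_mem {θ ε : ℝ} (hθ : θ ∈ Set.Icc (0 : ℝ) 1)
    (hε : ε ∈ Set.Ioo (-1 : ℝ) 1) : 0 < 1 + ε * θ := by
  have : |ε * θ| < 1 := by
    rw [abs_mul]
    exact mul_lt_one_of_nonneg_of_lt_one_left (abs_nonneg ε) (abs_lt.2 hε)
      (abs_le.2 ⟨by linarith [hθ.1], hθ.2⟩)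
  linarith [neg_abs_le (ε * θ)]

lemma mul_one_sub_sq_nonneg {θ : ℝ} (hθ : θ ∈ Set.Icc (0 : ℝ) 1) : 0 ≤ θ * (1 - θ ^ 2) :=
  mul_nonneg hθ.1 (sub_nonneg.2 (pow_le_one₀ hθ.1 hθ.2))

/-- Scalar G-stability identity of the variable-step DLN method. -/
theorem dln_G_stability_identity_scalar
    (θ ε : ℝ) (hθ : θ ∈ Set.Icc (0 : ℝ) 1) (hε : ε ∈ Set.Ioo (-1 : ℝ) 1)
    (x y z : ℝ) :
    (dlnAlpha2 θ * x + dlnAlpha1 θ * y + dlnAlpha0 θ * z)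
      * (dlnBeta2 θ ε * x + dlnBeta1 θ ε * y + dlnBeta0 θ ε * z)
      = (((1 + θ) / 4) * x ^ 2 + ((1 - θ) / 4) * y ^ 2)
        - (((1 + θ) / 4) * y ^ 2 + ((1 - θ) / 4) * z ^ 2)
        + (dlnA2 θ ε * x + dlnA1 θ ε * y + dlnA0 θ ε * z) ^ 2 := by
  rw [dlnA_combination_sq, dlnA1_sq ε (mul_one_sub_sq_nonneg hθ)]
  exact dln_product_eq (one_add_mul_pos_of_mem hθ hε).ne' x y z
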